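/- arXiv:2104.12530 — 2 statements merged into one kernel-verified Lean document; each statement's English description precedes it below -/
import Mathlib

section
/- For every index i, the function h ↦ LN_2(h)_i − u_ex(h)_i is O(h³) as h → 0 from the right; i.e., the two-stage linear-neighbour method LN2 has local truncation error of order three, so it is a second-order method (Appendix A, point C). -/
/-!
Both `LN₂(h)` and `u_ex(h)` agree with the Taylor polynomial `u⁰ + h u' + (h²/2) M u'`,
`u' = M u⁰ + Q`, up to `O(h³)`. For the exact solution this is the exponential series of `e^{hM}`
truncated after the quadratic term, and after the linear term under the integral. For `LN₂`,
coordinate `i` equals `u⁰_i + h φ₁(mh) u'_i + s h² φ₂(mh)` with `m = M_ii`, where `φ₁`, `φ₂` are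
the φ-functions of exponential integrators and the slope `s` computed from `CN₁` is
`Σ_{j≠i} M_ij u'_j + O(h)`. Expanding `φ₁(z) = 1 + z/2 + O(z²)` and `φ₂(z) = 1/2 + O(z)` yields the
same polynomial, because `m u'_i + Σ_{j≠i} M_ij u'_j = (M u')_i`.
-/

open Finset NormedSpace Asymptotics

/-- `aCoef M Q v i = Σ_{j≠i} M_ij v_j + Q_i`. -/
noncomputable def aCoef {N : ℕ} (M : Matrix (Fin N) (Fin N) ℝ) (Q : Fin N → ℝ)
    (v : Fin N → ℝ) (i : Fin N) : ℝ :=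
  (∑ j ∈ Finset.univ.erase i, M i j * v j) + Q i

/-- The constant-neighbour step `F_h`. -/
noncomputable def cnStep {N : ℕ} (M : Matrix (Fin N) (Fin N) ℝ) (Q u0 : Fin N → ℝ)
    (h : ℝ) (v : Fin N → ℝ) : Fin N → ℝ :=
  fun i => u0 i * Real.exp (M i i * h)
    + (aCoef M Q v i / (-(M i i))) * (1 - Real.exp (M i i * h))

/-- The `k`-stage constant-neighbour approximation `CN_k(h) = F_h^[k] u⁰`. -/
noncomputable def CN {N : ℕ} (M : Matrix (Fin N) (Fin N) ℝ) (Q u0 : Fin N → ℝ)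
    (k : ℕ) (h : ℝ) : Fin N → ℝ :=
  (cnStep M Q u0 h)^[k] u0

/-- The effective slope `s_i(v) = (a_i(v) − a_i(u⁰))/h`. -/
noncomputable def sCoef {N : ℕ} (M : Matrix (Fin N) (Fin N) ℝ) (Q u0 : Fin N → ℝ)
    (h : ℝ) (v : Fin N → ℝ) (i : Fin N) : ℝ :=
  (aCoef M Q v i - aCoef M Q u0 i) / h

/-- The linear-neighbour step `G_h`, with `τ_i = −1/M_ii`. -/
noncomputable def lnStep {N : ℕ} (M : Matrix (Fin N) (Fin N) ℝ) (Q u0 : Fin N → ℝ)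
    (h : ℝ) (v : Fin N → ℝ) : Fin N → ℝ :=
  fun i =>
    u0 i * Real.exp (M i i * h)
      + (aCoef M Q u0 i * (-(M i i)⁻¹) - sCoef M Q u0 h v i * (-(M i i)⁻¹) ^ 2)
          * (1 - Real.exp (M i i * h))
      + sCoef M Q u0 h v i * (-(M i i)⁻¹) * h

/-- The `k`-stage linear-neighbour approximation `LN_k(h) = G_h^[k−1] (CN_1(h))`, `k ≥ 2`. -/
noncomputable def LN {N : ℕ} (M : Matrix (Fin N) (Fin N) ℝ) (Q u0 : Fin N → ℝ)
    (k : ℕ) (h : ℝ) : Fin N → ℝ :=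
  (lnStep M Q u0 h)^[k - 1] (cnStep M Q u0 h u0)

/-- The exact solution `u_ex(h) = e^{hM} u⁰ + ∫₀^h e^{(h−s)M} Q ds`. -/
noncomputable def uex {N : ℕ} (M : Matrix (Fin N) (Fin N) ℝ) (Q u0 : Fin N → ℝ)
    (h : ℝ) : Fin N → ℝ :=
  (exp (h • M)).mulVec u0 + ∫ s in (0:ℝ)..h, (exp ((h - s) • M)).mulVec Q
open Filter Topology Nat Matrix

theorem NormedSpace.exp_smul_sub_sum_isBigO {𝕂 𝔸 : Type*} [RCLike 𝕂] [NormedRing 𝔸]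
    [NormedAlgebra 𝕂 𝔸] [CompleteSpace 𝔸] (A : 𝔸) (n : ℕ) :
    (fun t : 𝕂 => exp (t • A) - ∑ k ∈ range n, (t ^ k / k !) • A ^ k) =O[𝓝 0] (· ^ n) := by
  have hA : Tendsto (fun t : 𝕂 => t • A) (𝓝 0) (𝓝 0) := by
    simpa using (tendsto_id (x := 𝓝 (0 : 𝕂))).smul_const A
  have hnorm : (fun t : 𝕂 => ‖t • A‖ ^ n) =O[𝓝 0] (· ^ n) :=
    IsBigO.of_bound (‖A‖ ^ n) (Eventually.of_forall fun t => by
      simp [norm_smul, mul_pow, mul_comm])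
  refine (((exp_hasFPowerSeriesAt_zero (𝕂 := 𝕂)).isBigO_sub_partialSum_pow n).comp_tendsto hA
    |>.trans hnorm).congr_left fun t => ?_
  simp [FormalMultilinearSeries.partialSum, expSeries_apply_eq, smul_pow, smul_smul, div_eq_inv_mul]

theorem Real.exp_mul_sub_sum_isBigO (m : ℝ) (n : ℕ) :
    (fun t : ℝ => Real.exp (m * t) - ∑ k ∈ range n, (m * t) ^ k / k !) =O[𝓝 0] (· ^ n) :=
  (NormedSpace.exp_smul_sub_sum_isBigO m n).congr_left fun t => by
    simp only [Real.exp_eq_exp_ℝ, smul_eq_mul, mul_comm t, mul_pow]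
    congr 1
    refine sum_congr rfl fun k _ => by ring

theorem intervalIntegral.integral_isBigO_pow_succ {E : Type*} [NormedAddCommGroup E]
    [NormedSpace ℝ E] {g : ℝ → E} {n : ℕ} (hg : g =O[𝓝 0] (· ^ n)) :
    (fun h => ∫ s in (0 : ℝ)..h, g s) =O[𝓝 0] (· ^ (n + 1)) := by
  obtain ⟨C, hC, hgC⟩ := hg.exists_pos
  obtain ⟨ε, hε, hball⟩ := Metric.eventually_nhds_iff_ball.1 hgC.bound
  refine IsBigO.of_bound C ?_
  filter_upwards [Metric.ball_mem_nhds 0 hε] with h hh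
  have hbound : ∀ s ∈ Set.uIoc 0 h, ‖g s‖ ≤ C * |h| ^ n := fun s hs => by
    have hsh : |s| ≤ |h| := by
      simpa using Set.abs_sub_left_of_mem_uIcc (Set.uIoc_subset_uIcc hs)
    refine (hball s (by simpa using hsh.trans_lt (by simpa using hh))).trans ?_
    rw [norm_pow, Real.norm_eq_abs]
    gcongr
  calc ‖∫ s in (0 : ℝ)..h, g s‖ ≤ C * |h| ^ n * |h - 0| :=
        intervalIntegral.norm_integral_le_of_norm_le_const hbound
    _ = C * ‖h ^ (n + 1)‖ := by rw [sub_zero, norm_pow, Real.norm_eq_abs, pow_succ, mul_assoc]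

theorem Real.exp_mul_sub_linear_isBigO (m : ℝ) :
    (fun t : ℝ => Real.exp (m * t) - (1 + m * t)) =O[𝓝 0] (· ^ 2) :=
  (Real.exp_mul_sub_sum_isBigO m 2).congr_left fun t => by simp [sum_range_succ]

theorem Real.exp_mul_sub_quadratic_isBigO (m : ℝ) :
    (fun t : ℝ => Real.exp (m * t) - (1 + m * t + (m * t) ^ 2 / 2)) =O[𝓝 0] (· ^ 3) :=
  (Real.exp_mul_sub_sum_isBigO m 3).congr_left fun t => by simp [sum_range_succ]

/- `expPhiOne m h = h φ₁(mh)` and `expPhiTwo m h = h² φ₂(mh)`, where `φ₁(z) = (eᶻ - 1)/z` and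
`φ₂(z) = (eᶻ - 1 - z)/z²`; both take the junk value `0` at `m = 0`. -/
noncomputable def expPhiOne (m t : ℝ) : ℝ := (Real.exp (m * t) - 1) / m

noncomputable def expPhiTwo (m t : ℝ) : ℝ := (Real.exp (m * t) - 1 - m * t) / m ^ 2

theorem expPhiTwo_isBigO (m : ℝ) : expPhiTwo m =O[𝓝 0] (· ^ 2) :=
  ((Real.exp_mul_sub_linear_isBigO m).const_mul_left (m ^ 2)⁻¹).congr_left fun t => by
    rw [expPhiTwo, div_eq_inv_mul, sub_sub]

section ExpPhi

variable {m : ℝ}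

theorem expPhiOne_sub_isBigO (hm : m ≠ 0) : (fun t => expPhiOne m t - t) =O[𝓝 0] (· ^ 2) :=
  ((Real.exp_mul_sub_linear_isBigO m).const_mul_left m⁻¹).congr_left fun t => by
    rw [expPhiOne]
    field_simp
    ring

theorem expPhiOne_sub_quadratic_isBigO (hm : m ≠ 0) :
    (fun t => expPhiOne m t - (t + m * t ^ 2 / 2)) =O[𝓝 0] (· ^ 3) :=
  ((Real.exp_mul_sub_quadratic_isBigO m).const_mul_left m⁻¹).congr_left fun t => by
    rw [expPhiOne]
    field_simp
    ring

theorem expPhiTwo_sub_isBigO (hm : m ≠ 0) :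
    (fun t => expPhiTwo m t - t ^ 2 / 2) =O[𝓝 0] (· ^ 3) :=
  ((Real.exp_mul_sub_quadratic_isBigO m).const_mul_left (m ^ 2)⁻¹).congr_left fun t => by
    rw [expPhiTwo]
    field_simp
    ring

end ExpPhi

section MatrixExp

attribute [local instance] Matrix.linftyOpNormedRing Matrix.linftyOpNormedAlgebra

variable {n : Type*} [Fintype n] [DecidableEq n]

theorem Matrix.exp_smul_sub_sum_mulVec_isBigO (M : Matrix n n ℝ) (v : n → ℝ) (k : ℕ) :
    (fun t : ℝ => (exp (t • M) - ∑ j ∈ range k, (t ^ j / j !) • M ^ j) *ᵥ v)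
      =O[𝓝 0] (· ^ k) :=
  (IsBigO.of_bound ‖v‖ (Eventually.of_forall fun _ =>
    (linfty_opNorm_mulVec _ v).trans_eq (mul_comm _ _))).trans
    (NormedSpace.exp_smul_sub_sum_isBigO M k)

theorem Matrix.continuous_exp_smul_mulVec (M : Matrix n n ℝ) (v : n → ℝ) :
    Continuous fun t : ℝ => exp (t • M) *ᵥ v :=
  ((NormedSpace.exp_continuous).comp (continuous_id.smul continuous_const)).matrix_mulVec
    continuous_const

end MatrixExp

theorem uex_sub_taylor_isBigO {N : ℕ} (M : Matrix (Fin N) (Fin N) ℝ) (Q u0 : Fin N → ℝ) :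
    (fun h : ℝ => uex M Q u0 h
        - (u0 + h • (M *ᵥ u0 + Q) + (h ^ 2 / 2) • (M *ᵥ (M *ᵥ u0 + Q))))
      =O[𝓝 0] (· ^ 3) := by
  have hflip (h : ℝ) : ∫ s in (0 : ℝ)..h, exp ((h - s) • M) *ᵥ Q
      = ∫ s in (0 : ℝ)..h, exp (s • M) *ᵥ Q := by
    simpa using intervalIntegral.integral_comp_sub_left (a := 0) (b := h)
      (fun s => exp (s • M) *ᵥ Q) h
  have hintegral (h : ℝ) : ∫ s in (0 : ℝ)..h, (exp (s • M) - (1 + s • M)) *ᵥ Q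
      = (∫ s in (0 : ℝ)..h, exp (s • M) *ᵥ Q) - (h • Q + (h ^ 2 / 2) • (M *ᵥ Q)) := by
    simp only [sub_mulVec, add_mulVec, one_mulVec, smul_mulVec]
    rw [intervalIntegral.integral_sub ((continuous_exp_smul_mulVec M Q).intervalIntegrable _ _)
      (Continuous.intervalIntegrable (by fun_prop) _ _), intervalIntegral.integral_add
      intervalIntegrable_const (Continuous.intervalIntegrable (by fun_prop) _ _),
      intervalIntegral.integral_smul_const, integral_id]
    simp
  have hexp : (fun h : ℝ => (exp (h • M) - (1 + h • M + (h ^ 2 / 2) • M ^ 2)) *ᵥ u0)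
      =O[𝓝 0] (· ^ 3) :=
    (exp_smul_sub_sum_mulVec_isBigO M u0 3).congr_left fun h => by simp [sum_range_succ]
  have hint : (fun h : ℝ => ∫ s in (0 : ℝ)..h, (exp (s • M) - (1 + s • M)) *ᵥ Q)
      =O[𝓝 0] (· ^ 3) :=
    intervalIntegral.integral_isBigO_pow_succ
      ((exp_smul_sub_sum_mulVec_isBigO M Q 2).congr_left fun s => by simp [sum_range_succ])
  refine (hexp.add hint).congr_left fun h => ?_
  rw [hintegral, uex, hflip]
  simp only [sub_mulVec, add_mulVec, one_mulVec, smul_mulVec, mulVec_add, mulVec_mulVec, sq]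
  module

theorem Matrix.mulVec_apply_eq_add_sum_erase {n α : Type*} [Fintype n] [DecidableEq n]
    [NonUnitalNonAssocSemiring α] (M : Matrix n n α) (x : n → α) (i : n) :
    (M *ᵥ x) i = M i i * x i + ∑ j ∈ univ.erase i, M i j * x j := by
  simp only [mulVec, dotProduct]
  rw [← add_sum_erase _ _ (mem_univ i)]

section Schemes

variable {N : ℕ} (M : Matrix (Fin N) (Fin N) ℝ) (Q u0 : Fin N → ℝ)

theorem mulVec_add_apply_eq_add_aCoef (u : Fin N → ℝ) (i : Fin N) :
    (M *ᵥ u + Q) i = M i i * u i + aCoef M Q u i := by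
  rw [Pi.add_apply, mulVec_apply_eq_add_sum_erase, aCoef, add_assoc]

theorem aCoef_sub_aCoef (v w : Fin N → ℝ) (i : Fin N) :
    aCoef M Q v i - aCoef M Q w i = ∑ j ∈ univ.erase i, M i j * (v j - w j) := by
  simp only [aCoef, add_sub_add_right_eq_sub, ← sum_sub_distrib, mul_sub]

theorem cnStep_self_apply {j : Fin N} (hj : M j j ≠ 0) (h : ℝ) :
    cnStep M Q u0 h u0 j = u0 j + expPhiOne (M j j) h * (M *ᵥ u0 + Q) j := by
  rw [mulVec_add_apply_eq_add_aCoef, cnStep, expPhiOne]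
  field_simp
  ring

theorem lnStep_apply {i : Fin N} (hi : M i i ≠ 0) (h : ℝ) (v : Fin N → ℝ) :
    lnStep M Q u0 h v i
      = cnStep M Q u0 h u0 i + sCoef M Q u0 h v i * expPhiTwo (M i i) h := by
  rw [lnStep, cnStep, expPhiTwo]
  field_simp
  ring

theorem sCoef_cnStep_sub_isBigO (hM : ∀ j, M j j ≠ 0) (i : Fin N) :
    (fun h => sCoef M Q u0 h (cnStep M Q u0 h u0) i
        - ∑ j ∈ univ.erase i, M i j * (M *ᵥ u0 + Q) j) =O[𝓝[≠] 0] id := by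
  have hnum : (fun h => ∑ j ∈ univ.erase i, M i j * (M *ᵥ u0 + Q) j * (expPhiOne (M j j) h - h))
      =O[𝓝 0] (· ^ 2) :=
    (IsBigO.sum fun j _ => (expPhiOne_sub_isBigO (hM j)).const_mul_left _).congr_left
      fun h => sum_apply h _ _
  refine ((hnum.mono nhdsWithin_le_nhds).mul (isBigO_refl (·⁻¹) _)).congr' ?_ ?_
  · filter_upwards [self_mem_nhdsWithin] with h (hh : h ≠ 0)
    rw [sCoef, aCoef_sub_aCoef, div_eq_mul_inv]
    simp only [cnStep_self_apply M Q u0 (hM _)]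
    field_simp
    simp only [mul_sum, ← sum_sub_distrib]
    refine sum_congr rfl fun j _ => by ring
  · exact Eventually.of_forall fun h => by simp [sq, mul_self_mul_inv]

theorem LN_two_sub_taylor_isBigO (hM : ∀ j, M j j ≠ 0) (i : Fin N) :
    (fun h : ℝ => LN M Q u0 2 h i
        - (u0 + h • (M *ᵥ u0 + Q) + (h ^ 2 / 2) • (M *ᵥ (M *ᵥ u0 + Q))) i)
      =O[𝓝[≠] 0] (· ^ 3) := by
  have hφ₁ := (expPhiOne_sub_quadratic_isBigO (hM i)).const_mul_left ((M *ᵥ u0 + Q) i)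
  have hsφ₂ := (sCoef_cnStep_sub_isBigO M Q u0 hM i).mul
    ((expPhiTwo_isBigO (M i i)).mono nhdsWithin_le_nhds)
  have hφ₂ := (expPhiTwo_sub_isBigO (hM i)).const_mul_left
    (∑ j ∈ univ.erase i, M i j * (M *ᵥ u0 + Q) j)
  have hcube : (fun h : ℝ => id h * h ^ 2) =O[𝓝[≠] 0] (· ^ 3) :=
    (isBigO_refl (· ^ 3) _).congr_left fun h => by simp only [id]; ring
  refine (((hφ₁.mono nhdsWithin_le_nhds).add (hsφ₂.trans hcube)).add
    (hφ₂.mono nhdsWithin_le_nhds)).congr_left fun h => ?_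
  change _ = lnStep M Q u0 h (cnStep M Q u0 h u0) i - _
  rw [lnStep_apply M Q u0 (hM i), cnStep_self_apply M Q u0 (hM i)]
  simp only [Pi.add_apply, Pi.smul_apply, smul_eq_mul,
    mulVec_apply_eq_add_sum_erase M (M *ᵥ u0 + Q) i]
  ring

end Schemes

theorem ln2_second_order_general {N : ℕ} (M : Matrix (Fin N) (Fin N) ℝ)
    (hM : ∀ i, M i i < 0) (Q u0 : Fin N → ℝ) (i : Fin N) :
    (fun h : ℝ => LN M Q u0 2 h i - uex M Q u0 h i)
      =O[nhdsWithin 0 (Set.Ioi 0)] fun h : ℝ => h ^ 3 := by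
  have hLN := LN_two_sub_taylor_isBigO M Q u0 (fun j => (hM j).ne) i
  have huex := isBigO_pi.1 (uex_sub_taylor_isBigO M Q u0) i
  refine ((hLN.sub (huex.mono nhdsWithin_le_nhds)).mono (nhdsGT_le_nhdsNE 0)).congr_left
    fun h => ?_
  simp only [Pi.sub_apply]
  ring

/-- Appendix A, point C: the two-stage linear-neighbour method LN₂ has local
truncation error `O(h³)` as `h → 0⁺`, i.e. it is a second-order method. -/
theorem ln2_second_order {N : ℕ} (hN : 1 ≤ N) (M : Matrix (Fin N) (Fin N) ℝ)
    (hM : ∀ i, M i i < 0) (Q u0 : Fin N → ℝ) (i : Fin N) :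
    (fun h : ℝ => LN M Q u0 2 h i - uex M Q u0 h i)
      =O[nhdsWithin 0 (Set.Ioi 0)] fun h : ℝ => h ^ 3 :=
  ln2_second_order_general M hM Q u0 i
end

section
/- Under the heat-matrix assumptions with zero sources, for every index i there exist nonnegative weights w_1, …, w_N with Σ_j w_j = 1 such that LN_2(h)_i = Σ_j w_j u⁰_j; i.e., each component of the two-stage linear-neighbour update is a convex combination of the initial values (Appendix B, point C). -/
open Finset NormedSpace Asymptotics

/-!
With zero sources, `a_i(v) τ_i` is a weighted mean of the neighbour values `v_j`, with weights
`M_ij ≥ 0` summing to `-M_ii`. Writing `z = M_ii h < 0` and `φ₁(z) = (eᶻ - 1) / z`, the two steps are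
`F_h(v)_i = eᶻ u⁰_i + (1 - eᶻ) · mean(v)` and
`G_h(v)_i = eᶻ u⁰_i + (φ₁(z) - eᶻ) · mean(u⁰) + (1 - φ₁(z)) · mean(v)`, and `eᶻ ≤ φ₁(z) ≤ 1`
because `eˣ ≥ 1 + x`. Hence both steps map vectors with entries in a convex set containing all
`u⁰_j` to such vectors; take the convex hull of the `u⁰_j`.
-/

section ConvexCombination

variable {𝕜 E ι : Type*} [Field 𝕜] [LinearOrder 𝕜] [IsStrictOrderedRing 𝕜]
  [AddCommGroup E] [Module 𝕜 E]

theorem Convex.smul_add_smul_add_smul_mem {s : Set E} (hs : Convex 𝕜 s) {x y z : E}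
    (hx : x ∈ s) (hy : y ∈ s) (hz : z ∈ s) {a b c : 𝕜} (ha : 0 ≤ a) (hb : 0 ≤ b) (hc : 0 ≤ c)
    (habc : a + b + c = 1) : a • x + b • y + c • z ∈ s := by
  have := hs.sum_mem (t := univ) (w := ![a, b, c]) (z := ![x, y, z])
    (by simp [Fin.forall_fin_succ, ha, hb, hc]) (by simp [Fin.sum_univ_three, habc])
    (by simp [Fin.forall_fin_succ, hx, hy, hz])
  simpa [Fin.sum_univ_three] using this

theorem exists_weights_of_mem_convexHull_range [Fintype ι] {v : ι → E} {x : E}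
    (hx : x ∈ convexHull 𝕜 (Set.range v)) :
    ∃ w : ι → 𝕜, (∀ j, 0 ≤ w j) ∧ ∑ j, w j = 1 ∧ x = ∑ j, w j • v j := by
  classical
  have hrange : Set.range v = Fintype.linearCombination 𝕜 v '' Set.range (Pi.single · 1) := by
    rw [← Set.range_comp]
    congr 1
    ext j
    simp [Fintype.linearCombination_apply, Pi.single_apply]
  rw [hrange, ← LinearMap.image_convexHull, convexHull_rangle_single_eq_stdSimplex] at hx
  obtain ⟨w, ⟨hw₀, hw₁⟩, rfl⟩ := hx
  exact ⟨w, hw₀, hw₁, Fintype.linearCombination_apply 𝕜 v w⟩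

end ConvexCombination

/-- The first φ-function of exponential integrators. -/
noncomputable def phi1 (z : ℝ) : ℝ := (Real.exp z - 1) / z

theorem phi1_le_one {z : ℝ} (hz : z < 0) : phi1 z ≤ 1 := by
  rw [phi1, div_le_one_of_neg hz]
  linarith [Real.add_one_le_exp z]

theorem exp_le_phi1 {z : ℝ} (hz : z < 0) : Real.exp z ≤ phi1 z := by
  rw [phi1, le_div_iff_of_neg hz]
  have hexp := Real.add_one_le_exp (-z)
  have hpos := Real.exp_pos z
  have hmul : Real.exp z * Real.exp (-z) = 1 := by rw [← Real.exp_add, add_neg_cancel, Real.exp_zero]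
  nlinarith

section HeatMatrix

variable {N : ℕ} {M : Matrix (Fin N) (Fin N) ℝ} {S : Set ℝ} {u0 v : Fin N → ℝ} {h : ℝ}

/-- The neighbour mean `a_i(v) τ_i` for zero sources. -/
noncomputable def neighbourMean (M : Matrix (Fin N) (Fin N) ℝ) (v : Fin N → ℝ) (i : Fin N) : ℝ :=
  aCoef M 0 v i / -M i i

theorem sum_erase_diag_eq_neg (hrow : ∀ i, ∑ j, M i j = 0) (i : Fin N) :
    ∑ j ∈ univ.erase i, M i j = -M i i := by
  rw [sum_erase_eq_sub (mem_univ i), hrow i, zero_sub]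

theorem neighbourMean_mem (hS : Convex ℝ S) (hoff : ∀ i j, j ≠ i → 0 ≤ M i j)
    (hrow : ∀ i, ∑ j, M i j = 0) (hdiag : ∀ i, M i i < 0) (hv : ∀ j, v j ∈ S) (i : Fin N) :
    neighbourMean M v i ∈ S := by
  have hmean : neighbourMean M v i = (univ.erase i).centerMass (M i) v := by
    simp [neighbourMean, aCoef, centerMass, sum_erase_diag_eq_neg hrow, div_eq_inv_mul]
  rw [hmean]
  refine hS.centerMass_mem (fun j hj => hoff i j (ne_of_mem_erase hj)) ?_ (fun j _ => hv j)
  rw [sum_erase_diag_eq_neg hrow]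
  linarith [hdiag i]

theorem cnStep_zero_apply (u0 : Fin N → ℝ) (h : ℝ) (v : Fin N → ℝ) (i : Fin N) :
    cnStep M 0 u0 h v i =
      Real.exp (M i i * h) * u0 i + (1 - Real.exp (M i i * h)) * neighbourMean M v i := by
  simp only [cnStep, neighbourMean]
  ring

theorem lnStep_zero_apply (hdiag : ∀ i, M i i < 0) (u0 : Fin N → ℝ) (hh : h ≠ 0)
    (v : Fin N → ℝ) (i : Fin N) :
    lnStep M 0 u0 h v i =
      Real.exp (M i i * h) * u0 i + (phi1 (M i i * h) - Real.exp (M i i * h)) * neighbourMean M u0 i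
        + (1 - phi1 (M i i * h)) * neighbourMean M v i := by
  have hm : M i i ≠ 0 := (hdiag i).ne
  simp only [lnStep, sCoef, neighbourMean, phi1]
  field_simp
  ring

theorem cnStep_zero_mem (hS : Convex ℝ S) (hoff : ∀ i j, j ≠ i → 0 ≤ M i j)
    (hrow : ∀ i, ∑ j, M i j = 0) (hdiag : ∀ i, M i i < 0) (hu0 : ∀ j, u0 j ∈ S)
    (hv : ∀ j, v j ∈ S) (hh : 0 ≤ h) (i : Fin N) : cnStep M 0 u0 h v i ∈ S := by
  have hz : M i i * h ≤ 0 := mul_nonpos_of_nonpos_of_nonneg (hdiag i).le hh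
  rw [cnStep_zero_apply]
  exact hS (hu0 i) (neighbourMean_mem hS hoff hrow hdiag hv i) (Real.exp_pos _).le
    (sub_nonneg.2 (Real.exp_le_one_iff.2 hz)) (add_sub_cancel _ _)

theorem lnStep_zero_mem (hS : Convex ℝ S) (hoff : ∀ i j, j ≠ i → 0 ≤ M i j)
    (hrow : ∀ i, ∑ j, M i j = 0) (hdiag : ∀ i, M i i < 0) (hu0 : ∀ j, u0 j ∈ S)
    (hv : ∀ j, v j ∈ S) (hh : 0 < h) (i : Fin N) : lnStep M 0 u0 h v i ∈ S := by
  have hz : M i i * h < 0 := mul_neg_of_neg_of_pos (hdiag i) hh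
  rw [lnStep_zero_apply hdiag u0 hh.ne']
  exact hS.smul_add_smul_add_smul_mem (hu0 i) (neighbourMean_mem hS hoff hrow hdiag hu0 i)
    (neighbourMean_mem hS hoff hrow hdiag hv i) (Real.exp_pos _).le
    (sub_nonneg.2 (exp_le_phi1 hz)) (sub_nonneg.2 (phi1_le_one hz)) (by ring)

end HeatMatrix

theorem ln2_convex_combination_general {N : ℕ} (M : Matrix (Fin N) (Fin N) ℝ)
    (hoff : ∀ i j, j ≠ i → 0 ≤ M i j)
    (hrow : ∀ i, ∑ j, M i j = 0)
    (hdiag : ∀ i, M i i < 0)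
    (u0 : Fin N → ℝ) (h : ℝ) (hh : 0 < h) (i : Fin N) :
    ∃ w : Fin N → ℝ, (∀ j, 0 ≤ w j) ∧ (∑ j, w j) = 1 ∧
      LN M (0 : Fin N → ℝ) u0 2 h i = ∑ j, w j * u0 j := by
  set S := convexHull ℝ (Set.range u0)
  have hS : Convex ℝ S := convex_convexHull ℝ _
  have hu0 : ∀ j, u0 j ∈ S := fun j => subset_convexHull ℝ _ ⟨j, rfl⟩
  have hCN : ∀ k, cnStep M 0 u0 h u0 k ∈ S :=
    cnStep_zero_mem hS hoff hrow hdiag hu0 hu0 hh.le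
  have hLN : LN M 0 u0 2 h i ∈ S := lnStep_zero_mem hS hoff hrow hdiag hu0 hCN hh i
  simpa only [smul_eq_mul] using exists_weights_of_mem_convexHull_range hLN

/-- Appendix B, point C: under the heat-matrix assumptions with zero sources, each
component of the two-stage linear-neighbour update `LN_2(h)` is a convex combination
of the initial values. -/
theorem ln2_convex_combination {N : ℕ} (hN : 1 ≤ N) (M : Matrix (Fin N) (Fin N) ℝ)
    (hoff : ∀ i j, j ≠ i → 0 ≤ M i j)
    (hrow : ∀ i, ∑ j, M i j = 0)
    (hdiag : ∀ i, M i i < 0)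
    (u0 : Fin N → ℝ) (h : ℝ) (hh : 0 < h) (i : Fin N) :
    ∃ w : Fin N → ℝ, (∀ j, 0 ≤ w j) ∧ (∑ j, w j) = 1 ∧
      LN M (0 : Fin N → ℝ) u0 2 h i = ∑ j, w j * u0 j :=
  ln2_convex_combination_general M hoff hrow hdiag u0 h hh i
end
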